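/- arXiv:math/9906091 — 2 statements merged into one kernel-verified Lean document; each statement's English description precedes it below -/
import Mathlib

section
/- Let X be a finite-dimensional G-invariant subspace of L. Then every G-equivariant linear map T : X → L is the restriction of an invariant operator: there exists D ∈ A^G with D|_X = T. In other words, A^G|_X = Hom_G(X, L). (Equivariant Jacobson density, Proposition 1.11.) -/
/-!
Dixmier's lemma: an endomorphism `φ` of `L` commuting with `A` has nonempty spectrum, since
otherwise `r ↦ r(φ) v` would embed `ℂ(X)`, whose dimension is the continuum (the `(X - c)⁻¹` are
independent), into the countable-dimensional `L`; by Schur, `φ` is then a scalar. Hence every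
linear map on `L` commutes with `End_A(L)`, and Jacobson's density theorem yields some `D₀ ∈ A`
extending `T`. To make it invariant, split `A = P ⊕ Q` with `P` the `G`-stable subspace of
operators vanishing on `X` and `Q` a `G`-stable complement: equivariance of `T` puts
`g · D₀ - D₀` in `P`, so the `Q`-component of `D₀` is `G`-fixed and still restricts to `T`.
-/

/-- Conjugation action of a group element on endomorphisms of `L`:
`g · T := ρ(g) ∘ T ∘ ρ(g)⁻¹`. -/
def conjEnd {G L : Type*} [Group G] [AddCommGroup L] [Module ℂ L]
    (ρ : Representation ℂ G L) (g : G) :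
    Module.End ℂ L →ₗ[ℂ] Module.End ℂ L where
  toFun T := ρ g ∘ₗ T ∘ₗ ρ g⁻¹
  map_add' T S := by ext v; simp
  map_smul' c T := by ext v; simp

universe u v

open Polynomial Cardinal

section Spectrum

variable {K B : Type*} [Field K] [Ring B] [Algebra K B]

theorem isUnit_aeval_of_spectrum_eq_empty [IsAlgClosed K] {a : B} (ha : spectrum K a = ∅)
    {p : K[X]} (hp : p ≠ 0) : IsUnit (aeval a p) := by
  rcases (zero_le_degree_iff.mpr hp).lt_or_eq with hdeg | hdeg
  · rw [← spectrum.zero_notMem_iff K, spectrum.map_polynomial_aeval_of_degree_pos a p hdeg, ha,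
      Set.image_empty]
    exact Set.notMem_empty 0
  · rw [eq_C_of_degree_eq_zero hdeg.symm, aeval_C]
    exact (IsUnit.mk0 _ (coeff_ne_zero_of_eq_degree hdeg.symm)).map (algebraMap K B)

/-- `B` need not be commutative, so this goes through the universal property of the Ore
localization rather than `IsLocalization.lift`. -/
noncomputable def FractionRing.liftAeval (a : B) (ha : ∀ p : K[X], p ≠ 0 → IsUnit (aeval a p)) :
    FractionRing K[X] →ₐ[K] B where
  __ := OreLocalization.universalHom (aeval a).toRingHom
    (IsUnit.liftRight ((aeval a).toMonoidHom.comp (nonZeroDivisors K[X]).subtype)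
      fun p => ha p (nonZeroDivisors.ne_zero p.2)) fun _ => rfl
  commutes' c := by
    rw [IsScalarTower.algebraMap_apply K K[X] (FractionRing K[X]),
      ← Localization.mk_one_eq_algebraMap]
    exact (OreLocalization.universalHom_apply ..).trans (by simp)

end Spectrum

theorem Polynomial.cardinalMk_le_rank_fractionRing (K : Type*) [Field K] :
    #K ≤ Module.rank K (FractionRing K[X]) := by
  have hX : Transcendental K (algebraMap K[X] (FractionRing K[X]) X) :=
    (transcendental_algebraMap_iff (IsFractionRing.injective _ _)).2 (transcendental_X K)
  exact hX.linearIndependent_sub_inv.cardinal_le_rank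

theorem Module.End.spectrum_nonempty_of_rank_lt {K : Type u} {V : Type v} [Field K] [IsAlgClosed K]
    [AddCommGroup V] [Module K V] [Nontrivial V]
    (hV : lift.{u} (Module.rank K V) < lift.{v} #K) (φ : Module.End K V) :
    (spectrum K φ).Nonempty := by
  rw [Set.nonempty_iff_ne_empty]
  intro hφ
  obtain ⟨v, hv⟩ := exists_ne (0 : V)
  let Φ := FractionRing.liftAeval φ fun _ => isUnit_aeval_of_spectrum_eq_empty hφ
  have hinj : Function.Injective (LinearMap.applyₗ v ∘ₗ Φ.toLinearMap) := by
    refine (injective_iff_map_eq_zero _).2 fun r hr => by_contra fun hr0 => hv ?_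
    have hunit : IsUnit (Φ r) := (IsUnit.mk0 r hr0).map Φ
    exact (Module.End.isUnit_iff _ |>.1 hunit).1 (hr.trans (map_zero _).symm)
  have := (lift_le.2 (Polynomial.cardinalMk_le_rank_fractionRing K)).trans
    (LinearMap.lift_rank_le_of_injective _ hinj)
  exact hV.not_ge this

section Dixmier

variable {K : Type u} {R : Type*} {V : Type v} [Field K] [IsAlgClosed K] [Ring R] [Algebra K R]
  [AddCommGroup V] [Module K V] [Module R V] [IsScalarTower K R V] [IsSimpleModule R V]

theorem Module.End.exists_eq_algebraMap_of_rank_lt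
    (hV : lift.{u} (Module.rank K V) < lift.{v} #K) (f : Module.End R V) :
    ∃ c : K, f = algebraMap K (Module.End R V) c := by
  have := IsSimpleModule.nontrivial R V
  obtain ⟨c, hc⟩ := Module.End.spectrum_nonempty_of_rank_lt hV (f.restrictScalars K)
  refine ⟨c, sub_eq_zero.1 ((f - algebraMap K _ c).bijective_or_eq_zero.resolve_left fun hbij => ?_)⟩
  rw [spectrum.mem_iff, ← IsUnit.neg_iff, neg_sub, Module.End.isUnit_iff] at hc
  exact hc hbij

theorem jacobson_density_of_rank_lt
    (hV : lift.{u} (Module.rank K V) < lift.{v} #K) (f : Module.End K V) (s : Finset V) :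
    ∃ r : R, ∀ m ∈ s, f m = r • m := by
  let f' : Module.End (Module.End R V) V :=
    { toFun := f
      map_add' := f.map_add
      map_smul' := fun g m => by
        obtain ⟨c, rfl⟩ := Module.End.exists_eq_algebraMap_of_rank_lt hV g
        simp }
  exact jacobson_density f' s

end Dixmier

namespace Subalgebra

variable {K : Type u} {V : Type v} [Field K] [AddCommGroup V] [Module K V]
  (A : Subalgebra K (Module.End K V))

theorem isSimpleModule_of_irreducible [Nontrivial V]
    (hA : ∀ p : Submodule K V, (∀ T ∈ A, ∀ x ∈ p, T x ∈ p) → p = ⊥ ∨ p = ⊤) :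
    IsSimpleModule A V where
  eq_bot_or_eq_top N := by
    simpa only [Submodule.restrictScalars_eq_bot_iff, Submodule.restrictScalars_eq_top_iff] using
      hA (N.restrictScalars K) fun T hT _ hx => N.smul_mem ⟨T, hT⟩ hx

theorem exists_eqOn_finset_of_irreducible [IsAlgClosed K]
    (hV : lift.{u} (Module.rank K V) < lift.{v} #K)
    (hA : ∀ p : Submodule K V, (∀ T ∈ A, ∀ x ∈ p, T x ∈ p) → p = ⊥ ∨ p = ⊤)
    (f : Module.End K V) (s : Finset V) : ∃ a ∈ A, ∀ m ∈ s, a m = f m := by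
  cases subsingleton_or_nontrivial V
  · exact ⟨0, A.zero_mem, fun _ _ => Subsingleton.elim _ _⟩
  have := A.isSimpleModule_of_irreducible hA
  obtain ⟨a, ha⟩ := jacobson_density_of_rank_lt (R := A) hV f s
  exact ⟨a, a.2, fun m hm => (ha m hm).symm⟩

theorem exists_eqOn_of_irreducible [IsAlgClosed K]
    (hV : lift.{u} (Module.rank K V) < lift.{v} #K)
    (hA : ∀ p : Submodule K V, (∀ T ∈ A, ∀ x ∈ p, T x ∈ p) → p = ⊥ ∨ p = ⊤)
    {X : Submodule K V} [FiniteDimensional K X] (T : X →ₗ[K] V) :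
    ∃ a ∈ A, ∀ x : X, a x = T x := by
  classical
  obtain ⟨f, hf⟩ := LinearMap.exists_extend T
  let b := Module.finBasis K X
  obtain ⟨a, haA, ha⟩ := A.exists_eqOn_finset_of_irreducible hV hA f (Finset.univ.image (b ·))
  refine ⟨a, haA, LinearMap.congr_fun (b.ext fun i => ?_ : a ∘ₗ X.subtype = T)⟩
  rw [← hf]
  exact ha _ (Finset.mem_image_of_mem _ (Finset.mem_univ i))

end Subalgebra

theorem Submodule.exists_fixed_of_sub_mem {R M G : Type*} [Ring R] [AddCommGroup M] [Module R M]
    (σ : G → M →ₗ[R] M) {P Q : Submodule R M} (hPQ : Disjoint P Q)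
    (hP : ∀ g, ∀ y ∈ P, σ g y ∈ P) (hQ : ∀ g, ∀ y ∈ Q, σ g y ∈ Q)
    {x : M} (hx : x ∈ P ⊔ Q) (hσx : ∀ g, σ g x - x ∈ P) :
    ∃ y ∈ Q, x - y ∈ P ∧ ∀ g, σ g y = y := by
  obtain ⟨p, hp, y, hy, rfl⟩ := Submodule.mem_sup.1 hx
  refine ⟨y, hy, by simpa using hp, fun g => sub_eq_zero.1 ?_⟩
  refine Submodule.disjoint_def.1 hPQ _ ?_ (sub_mem (hQ g y hy) hy)
  have : σ g y - y = (σ g (p + y) - (p + y)) - (σ g p - p) := by rw [map_add]; abel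
  rw [this]
  exact sub_mem (hσx g) (sub_mem (hP g p hp) hp)

theorem lift_rank_lt_mk_complex {L : Type v} [AddCommGroup L] [Module ℂ L]
    (hcount : ∃ s : Set L, s.Countable ∧ Submodule.span ℂ s = ⊤) :
    lift.{0} (Module.rank ℂ L) < lift.{v} #ℂ := by
  obtain ⟨s, hs, hspan⟩ := hcount
  have hrank : Module.rank ℂ L ≤ ℵ₀ := by
    rw [← rank_top, ← hspan]
    exact (rank_span_le s).trans (mk_le_aleph0_iff.2 hs.to_subtype)
  simpa [mk_complex] using hrank.trans_lt aleph0_lt_continuum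

theorem conjEnd_apply_eq_of_forall_eq {G L : Type*} [Group G] [AddCommGroup L] [Module ℂ L]
    (ρ : Representation ℂ G L) {X : Submodule ℂ L} (hXinv : ∀ g : G, ∀ x ∈ X, ρ g x ∈ X)
    {T : X →ₗ[ℂ] L} (hT : ∀ (g : G) (x : X), T ⟨ρ g ↑x, hXinv g ↑x x.2⟩ = ρ g (T x))
    {D : Module.End ℂ L} (hD : ∀ x : X, D x = T x) (g : G) (x : X) :
    conjEnd ρ g D x = T x := by
  change ρ g (D (ρ g⁻¹ x)) = T x
  rw [hD ⟨_, hXinv g⁻¹ x x.2⟩, ← hT]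
  congr
  exact Representation.self_inv_apply ρ g x

theorem equivariant_jacobson_density_general
    {G L : Type*} [Group G] [AddCommGroup L] [Module ℂ L]
    (ρ : Representation ℂ G L)
    -- `L` has countable dimension
    (hcount : ∃ s : Set L, s.Countable ∧ Submodule.span ℂ s = ⊤)
    (A : Subalgebra ℂ (Module.End ℂ L))
    -- `A` acts irreducibly on `L`
    (hAirr : ∀ p : Submodule ℂ L, (∀ T ∈ A, ∀ x ∈ p, T x ∈ p) → p = ⊥ ∨ p = ⊤)
    -- `A` is invariant under the conjugation `G`-action
    (hAG : ∀ g : G, ∀ T ∈ A, conjEnd ρ g T ∈ A)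
    -- the `G`-action on `A` is completely reducible
    (hAcompred : ∀ p : Submodule ℂ (Module.End ℂ L),
      p ≤ Subalgebra.toSubmodule A → (∀ g : G, ∀ S ∈ p, conjEnd ρ g S ∈ p) →
      ∃ q : Submodule ℂ (Module.End ℂ L), q ≤ Subalgebra.toSubmodule A ∧
        (∀ g : G, ∀ S ∈ q, conjEnd ρ g S ∈ q) ∧
        p ⊓ q = ⊥ ∧ p ⊔ q = Subalgebra.toSubmodule A)
    -- `X` is a finite-dimensional `G`-invariant subspace of `L`
    (X : Submodule ℂ L) (hXfin : FiniteDimensional ℂ X)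
    (hXinv : ∀ g : G, ∀ x ∈ X, ρ g x ∈ X)
    -- `T : X → L` is `G`-equivariant
    (T : X →ₗ[ℂ] L)
    (hT : ∀ (g : G) (x : X), T ⟨ρ g ↑x, hXinv g ↑x x.2⟩ = ρ g (T x)) :
    ∃ D ∈ A, (∀ g : G, conjEnd ρ g D = D) ∧ ∀ x : X, D ↑x = T x := by
  obtain ⟨D₀, hD₀A, hD₀⟩ := A.exists_eqOn_of_irreducible (lift_rank_lt_mk_complex hcount) hAirr T
  let P := Subalgebra.toSubmodule A ⊓ LinearMap.ker (LinearMap.lcomp ℂ L X.subtype)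
  have mem_P {D : Module.End ℂ L} : D ∈ P ↔ D ∈ A ∧ ∀ x : X, D x = 0 := by
    simp [P, LinearMap.ext_iff]
  have hPG : ∀ g, ∀ D ∈ P, conjEnd ρ g D ∈ P := fun g D hD =>
    mem_P.2 ⟨hAG g D (mem_P.1 hD).1,
      conjEnd_apply_eq_of_forall_eq ρ hXinv (T := 0) (by simp) (mem_P.1 hD).2 g⟩
  obtain ⟨Q, hQA, hQG, hPQ, hPQA⟩ := hAcompred P inf_le_left hPG
  have hD₀G : ∀ g, conjEnd ρ g D₀ - D₀ ∈ P := fun g => mem_P.2 ⟨sub_mem (hAG g D₀ hD₀A) hD₀A,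
    fun x => by simp [conjEnd_apply_eq_of_forall_eq ρ hXinv hT hD₀, hD₀]⟩
  obtain ⟨D, hDQ, hD₀D, hDG⟩ := Submodule.exists_fixed_of_sub_mem (conjEnd ρ)
    (disjoint_iff.2 hPQ) hPG hQG (hPQA ▸ hD₀A) hD₀G
  refine ⟨D, hQA hDQ, hDG, fun x => ?_⟩
  have hx := (mem_P.1 hD₀D).2 x
  rwa [LinearMap.sub_apply, hD₀, sub_eq_zero, eq_comm] at hx

/-- **Equivariant Jacobson density (Proposition 1.11).**
Let `G` act on a complex vector space `L` of countable dimension via `ρ`; the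
action is locally finite and completely reducible.  Let `A` be a unital
subalgebra of `End ℂ L` acting irreducibly on `L`, invariant under the
conjugation `G`-action, and locally finite and completely reducible as a
`G`-module.  If `X` is a finite-dimensional `G`-invariant subspace of `L`,
then every `G`-equivariant linear map `T : X → L` is the restriction of a
`G`-invariant operator `D ∈ A^G`. -/
theorem equivariant_jacobson_density
    {G L : Type*} [Group G] [AddCommGroup L] [Module ℂ L]
    (ρ : Representation ℂ G L)
    -- `L` has countable dimension
    (hcount : ∃ s : Set L, s.Countable ∧ Submodule.span ℂ s = ⊤)
    -- the `G`-action on `L` is locally finite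
    (hlocfin : ∀ v : L, ∃ Y : Submodule ℂ L,
      (∀ g : G, ∀ y ∈ Y, ρ g y ∈ Y) ∧ FiniteDimensional ℂ Y ∧ v ∈ Y)
    -- the `G`-action on `L` is completely reducible
    (hcompred : ∀ p : Submodule ℂ L, (∀ g : G, ∀ y ∈ p, ρ g y ∈ p) →
      ∃ q : Submodule ℂ L, (∀ g : G, ∀ y ∈ q, ρ g y ∈ q) ∧ IsCompl p q)
    (A : Subalgebra ℂ (Module.End ℂ L))
    -- `A` acts irreducibly on `L`
    (hAirr : ∀ p : Submodule ℂ L, (∀ T ∈ A, ∀ x ∈ p, T x ∈ p) → p = ⊥ ∨ p = ⊤)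
    -- `A` is invariant under the conjugation `G`-action
    (hAG : ∀ g : G, ∀ T ∈ A, conjEnd ρ g T ∈ A)
    -- the `G`-action on `A` is locally finite
    (hAlocfin : ∀ T ∈ A, ∃ E : Submodule ℂ (Module.End ℂ L),
      E ≤ Subalgebra.toSubmodule A ∧ (∀ g : G, ∀ S ∈ E, conjEnd ρ g S ∈ E) ∧
      FiniteDimensional ℂ E ∧ T ∈ E)
    -- the `G`-action on `A` is completely reducible
    (hAcompred : ∀ p : Submodule ℂ (Module.End ℂ L),
      p ≤ Subalgebra.toSubmodule A → (∀ g : G, ∀ S ∈ p, conjEnd ρ g S ∈ p) →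
      ∃ q : Submodule ℂ (Module.End ℂ L), q ≤ Subalgebra.toSubmodule A ∧
        (∀ g : G, ∀ S ∈ q, conjEnd ρ g S ∈ q) ∧
        p ⊓ q = ⊥ ∧ p ⊔ q = Subalgebra.toSubmodule A)
    -- `X` is a finite-dimensional `G`-invariant subspace of `L`
    (X : Submodule ℂ L) (hXfin : FiniteDimensional ℂ X)
    (hXinv : ∀ g : G, ∀ x ∈ X, ρ g x ∈ X)
    -- `T : X → L` is `G`-equivariant
    (T : X →ₗ[ℂ] L)
    (hT : ∀ (g : G) (x : X), T ⟨ρ g ↑x, hXinv g ↑x x.2⟩ = ρ g (T x)) :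
    ∃ D ∈ A, (∀ g : G, conjEnd ρ g D = D) ∧ ∀ x : X, D ↑x = T x :=
  equivariant_jacobson_density_general ρ hcount A hAirr hAG hAcompred X hXfin hXinv T hT
end

section
/- If V and W are finite-dimensional irreducible complex G-representations with Hom_G(V, L) ≠ 0 and Hom_G(W, L) ≠ 0, and Hom_G(V, L) and Hom_G(W, L) are isomorphic as A^G-modules, then V and W are isomorphic as G-representations. (Abstract Frobenius decomposition, Theorem 2.2, part 2: multiplicity spaces for distinct isotypes are pairwise non-isomorphic A^G-modules.) -/
/-- The space `Hom_G(V, L)` of `G`-equivariant linear maps `V →ₗ[ℂ] L`. -/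
def homG {G L V : Type*} [Group G] [AddCommGroup L] [Module ℂ L]
    [AddCommGroup V] [Module ℂ V]
    (ρ : Representation ℂ G L) (π : Representation ℂ G V) :
    Submodule ℂ (V →ₗ[ℂ] L) where
  carrier := {T | ∀ g : G, T ∘ₗ π g = ρ g ∘ₗ T}
  add_mem' := by
    intro T S hT hS g
    rw [LinearMap.add_comp, LinearMap.comp_add, hT g, hS g]
  zero_mem' := by
    intro g
    rw [LinearMap.zero_comp, LinearMap.comp_zero]
  smul_mem' := by
    intro c T hT g
    rw [LinearMap.smul_comp, LinearMap.comp_smul, hT g]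

/-!
Take `0 ≠ T ∈ Hom_G(V, L)` and `T' = e T`; both are injective by Schur's lemma. If their images
meet, irreducibility forces them to coincide, and `T'⁻¹ ∘ T` is the required isomorphism.
Otherwise let `φ` be a projection of `L` onto `im T` that kills `im T'`. Since `L` has countable
dimension over the uncountable field `ℂ`, the commutant of the irreducible algebra `A` is `ℂ`
(Dixmier's lemma), so the Jacobson density theorem yields `D₀ ∈ A` agreeing with `φ` on the
finite-dimensional space `im T + im T'`, and complete reducibility of `A` under `G` lets us replace
`D₀` by a `G`-invariant `D` with the same restriction. Then `D ∘ T = T`, so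
`T' = e (D ∘ T) = D ∘ T' = 0`, a contradiction.
-/

open Cardinal

universe u v

theorem Subalgebra.isField_centralizer_centralizer_singleton {k D : Type*} [Field k]
    [DivisionRing D] [Algebra k D] (x : D) :
    IsField (Subalgebra.centralizer k (Subalgebra.centralizer k {x} : Set D)) := by
  have hcomm := Set.centralizer_centralizer_comm_of_comm (S := ({x} : Set D)) (by simp)
  refine ⟨⟨0, 1, zero_ne_one⟩, fun a b => Subtype.ext (hcomm _ a.2 _ b.2), fun {a} ha => ?_⟩
  refine ⟨⟨(a : D)⁻¹, Set.inv_mem_centralizer₀ a.2⟩, Subtype.ext ?_⟩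
  exact mul_inv_cancel₀ (by simpa [Subtype.ext_iff] using ha)

theorem Algebra.isAlgebraic_of_lift_rank_lt {k : Type u} {D : Type v} [Field k] [DivisionRing D]
    [Algebra k D] (h : lift.{u} (Module.rank k D) < lift.{v} #k) : Algebra.IsAlgebraic k D := by
  refine ⟨fun x => ?_⟩
  by_contra hx
  -- The double centralizer of `x` is a subfield of `D` containing `x`.
  let K := Subalgebra.centralizer k (Subalgebra.centralizer k {x} : Set D)
  let _ : Field K := (Subalgebra.isField_centralizer_centralizer_singleton x).toField
  have hxK : x ∈ K := Set.subset_centralizer_centralizer rfl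
  have hxt : Transcendental k (⟨x, hxK⟩ : K) := fun h => hx (h.algHom K.val)
  have hli := (hxt.linearIndependent_sub_inv.map' (Subalgebra.toSubmodule K).subtype
    (Submodule.ker_subtype _)).cardinal_lift_le_rank
  exact lt_irrefl _ (hli.trans_lt h)

section SimpleModule

variable {k : Type u} {R : Type*} {M : Type v} [Field k] [Ring R] [Algebra k R]
  [AddCommGroup M] [Module k M] [Module R M] [IsScalarTower k R M] [IsSimpleModule R M]

theorem IsSimpleModule.rank_end_le : Module.rank k (Module.End R M) ≤ Module.rank k M := by
  have := IsSimpleModule.nontrivial R M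
  obtain ⟨m, hm⟩ := exists_ne (0 : M)
  let ev : Module.End R M →ₗ[k] M :=
    { toFun f := f m, map_add' _ _ := rfl, map_smul' _ _ := rfl }
  refine ev.rank_le_of_injective ((injective_iff_map_eq_zero ev).mpr fun f hf => ?_)
  by_contra hf0
  exact hm ((LinearMap.bijective_of_ne_zero hf0).injective (hf.trans f.map_zero.symm))

theorem IsSimpleModule.algebraMap_end_bijective_of_rank_lt [IsAlgClosed k]
    (h : lift.{u} (Module.rank k M) < lift.{v} #k) :
    Function.Bijective (algebraMap k (Module.End R M)) := by
  classical
  have : Algebra.IsAlgebraic k (Module.End R M) :=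
    Algebra.isAlgebraic_of_lift_rank_lt ((lift_le.mpr IsSimpleModule.rank_end_le).trans_lt h)
  exact IsAlgClosed.algebraMap_bijective_of_isIntegral

end SimpleModule

section Density

variable {k : Type u} {L : Type v} [Field k] [AddCommGroup L] [Module k L]
  (A : Subalgebra k (Module.End k L))

theorem Subalgebra.isSimpleModule_of_forall_invariant [Nontrivial L]
    (hA : ∀ p : Submodule k L, (∀ T ∈ A, ∀ x ∈ p, T x ∈ p) → p = ⊥ ∨ p = ⊤) :
    IsSimpleModule A L where
  eq_bot_or_eq_top p :=
    (hA (p.restrictScalars k) fun T hT _ hx => p.smul_mem (⟨T, hT⟩ : A) hx).imp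
      (Submodule.restrictScalars_eq_bot_iff k A L).mp
      (Submodule.restrictScalars_eq_top_iff k A L).mp

theorem Subalgebra.exists_mem_eqOn_of_isSimpleModule [IsAlgClosed k] [IsSimpleModule A L]
    (hrank : lift.{u} (Module.rank k L) < lift.{v} #k) (φ : Module.End k L)
    (Y : Submodule k L) [FiniteDimensional k Y] : ∃ D ∈ A, ∀ y ∈ Y, D y = φ y := by
  obtain ⟨s, hs⟩ := (Submodule.fg_iff_finiteDimensional Y).mpr ‹_›
  have hscalar := IsSimpleModule.algebraMap_end_bijective_of_rank_lt (R := A) hrank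
  let f : Module.End (Module.End A L) L :=
    { toFun := φ
      map_add' := φ.map_add
      map_smul' ψ m := by
        obtain ⟨c, rfl⟩ := hscalar.2 ψ
        exact φ.map_smul c m }
  obtain ⟨D, hD⟩ := jacobson_density f s
  refine ⟨D, D.2, fun y hy => ?_⟩
  rw [← hs] at hy
  exact LinearMap.eqOn_span (fun m hm => (hD m hm).symm) hy

end Density

theorem lift_rank_lt_lift_mk_complex_of_countable_span {L : Type v} [AddCommGroup L] [Module ℂ L]
    {s : Set L} (hs : s.Countable) (hspan : Submodule.span ℂ s = ⊤) :
    lift.{0} (Module.rank ℂ L) < lift.{v} #ℂ := by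
  have := hs.to_subtype
  have hle : Module.rank ℂ L ≤ ℵ₀ := by
    rw [← rank_top, ← hspan]
    exact (rank_span_le s).trans mk_le_aleph0
  rw [mk_complex, lift_continuum]
  exact (lift_le_aleph0.mpr hle).trans_lt aleph0_lt_continuum

section Representation

variable {G L : Type*} [Group G] [AddCommGroup L] [Module ℂ L] {ρ : Representation ℂ G L}
  {V : Type*} [AddCommGroup V] [Module ℂ V] {π : Representation ℂ G V}
  {V' : Type*} [AddCommGroup V'] [Module ℂ V'] {π' : Representation ℂ G V'}

theorem conjEnd_apply (g : G) (T : Module.End ℂ L) (x : L) :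
    conjEnd ρ g T x = ρ g (T (ρ g⁻¹ x)) :=
  rfl

theorem mem_homG_iff {T : V →ₗ[ℂ] L} : T ∈ homG ρ π ↔ ∀ g v, T (π g v) = ρ g (T v) :=
  forall_congr' fun _ => LinearMap.ext_iff

theorem injective_of_mem_homG
    (hV : ∀ p : Submodule ℂ V, (∀ g : G, ∀ v ∈ p, π g v ∈ p) → p = ⊥ ∨ p = ⊤)
    {T : V →ₗ[ℂ] L} (hT : T ∈ homG ρ π) (hT0 : T ≠ 0) : Function.Injective T := by
  rw [← LinearMap.ker_eq_bot]
  refine (hV _ fun g v hv => ?_).resolve_right fun h => hT0 (LinearMap.ker_eq_top.mp h)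
  rw [LinearMap.mem_ker, mem_homG_iff.mp hT, LinearMap.mem_ker.mp hv, map_zero]

theorem range_invariant_of_mem_homG {T : V →ₗ[ℂ] L} (hT : T ∈ homG ρ π) :
    ∀ g : G, ∀ x ∈ LinearMap.range T, ρ g x ∈ LinearMap.range T := by
  rintro g _ ⟨v, rfl⟩
  exact ⟨π g v, mem_homG_iff.mp hT g v⟩

theorem range_le_range_of_not_disjoint
    (hV : ∀ p : Submodule ℂ V, (∀ g : G, ∀ v ∈ p, π g v ∈ p) → p = ⊥ ∨ p = ⊤)
    {T : V →ₗ[ℂ] L} {T' : V' →ₗ[ℂ] L} (hT : T ∈ homG ρ π) (hT' : T' ∈ homG ρ π')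
    (h : ¬Disjoint (LinearMap.range T) (LinearMap.range T')) :
    LinearMap.range T ≤ LinearMap.range T' := by
  have hinv : ∀ g, ∀ v ∈ (LinearMap.range T').comap T, π g v ∈ (LinearMap.range T').comap T :=
    fun g v hv => by
      rw [Submodule.mem_comap, mem_homG_iff.mp hT]
      exact range_invariant_of_mem_homG hT' g _ hv
  rcases hV _ hinv with hbot | htop
  · refine absurd ?_ h
    rw [Submodule.disjoint_def]
    rintro _ ⟨v, rfl⟩ hv
    have hv0 : v ∈ (⊥ : Submodule ℂ V) := hbot ▸ hv
    rw [(Submodule.mem_bot ℂ).mp hv0, map_zero]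
  · rw [LinearMap.range_eq_map, Submodule.map_le_iff_le_comap, htop]

theorem exists_equiv_of_not_disjoint_range
    (hV : ∀ p : Submodule ℂ V, (∀ g : G, ∀ v ∈ p, π g v ∈ p) → p = ⊥ ∨ p = ⊤)
    (hV' : ∀ p : Submodule ℂ V', (∀ g : G, ∀ v ∈ p, π' g v ∈ p) → p = ⊥ ∨ p = ⊤)
    {T : V →ₗ[ℂ] L} {T' : V' →ₗ[ℂ] L} (hT : T ∈ homG ρ π) (hT' : T' ∈ homG ρ π')
    (hTinj : Function.Injective T) (hT'inj : Function.Injective T')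
    (h : ¬Disjoint (LinearMap.range T) (LinearMap.range T')) :
    ∃ u : V ≃ₗ[ℂ] V', ∀ (g : G) (v : V), u (π g v) = π' g (u v) := by
  have hrange : LinearMap.range T = LinearMap.range T' :=
    le_antisymm (range_le_range_of_not_disjoint hV hT hT' h)
      (range_le_range_of_not_disjoint hV' hT' hT (by rwa [disjoint_comm]))
  let u : V ≃ₗ[ℂ] V' := (LinearEquiv.ofInjective T hTinj).trans
    ((LinearEquiv.ofEq _ _ hrange).trans (LinearEquiv.ofInjective T' hT'inj).symm)
  have hu : ∀ v, T' (u v) = T v := fun v => LinearEquiv.ofInjective_symm_apply (h := hT'inj) T' _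
  refine ⟨u, fun g v => hT'inj ?_⟩
  rw [hu, mem_homG_iff.mp hT, mem_homG_iff.mp hT', hu]

variable (ρ) {A : Subalgebra ℂ (Module.End ℂ L)}

/-- Split `D₀` along `A = p ⊕ q`, where `p` is the `G`-stable part of `A` vanishing on `Y`: the
`q`-component still agrees with `φ` on `Y`, and it differs from its `G`-translates by elements of
`p ∩ q = 0`. -/
theorem exists_fixed_mem_eqOn_of_mem_eqOn
    (hAG : ∀ g : G, ∀ T ∈ A, conjEnd ρ g T ∈ A)
    (hAcompred : ∀ p : Submodule ℂ (Module.End ℂ L),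
      p ≤ Subalgebra.toSubmodule A → (∀ g : G, ∀ S ∈ p, conjEnd ρ g S ∈ p) →
      ∃ q : Submodule ℂ (Module.End ℂ L), q ≤ Subalgebra.toSubmodule A ∧
        (∀ g : G, ∀ S ∈ q, conjEnd ρ g S ∈ q) ∧
        p ⊓ q = ⊥ ∧ p ⊔ q = Subalgebra.toSubmodule A)
    {Y : Submodule ℂ L} (hY : ∀ g : G, ∀ y ∈ Y, ρ g y ∈ Y) {φ : Module.End ℂ L}
    (hφ : ∀ g : G, ∀ y ∈ Y, φ (ρ g y) = ρ g (φ y))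
    {D₀ : Module.End ℂ L} (hD₀ : D₀ ∈ A) (hD₀φ : ∀ y ∈ Y, D₀ y = φ y) :
    ∃ D ∈ A, (∀ g : G, conjEnd ρ g D = D) ∧ ∀ y ∈ Y, D y = φ y := by
  let p := Subalgebra.toSubmodule A ⊓ LinearMap.ker (LinearMap.lcomp ℂ L Y.subtype)
  have mem_p : ∀ S, S ∈ p ↔ S ∈ A ∧ ∀ y ∈ Y, S y = 0 := fun S => by
    simp [p, LinearMap.ext_iff]
  have hpinv : ∀ g : G, ∀ S ∈ p, conjEnd ρ g S ∈ p := by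
    intro g S hS
    rw [mem_p] at hS ⊢
    refine ⟨hAG g S hS.1, fun y hy => ?_⟩
    rw [conjEnd_apply, hS.2 _ (hY g⁻¹ y hy), map_zero]
  obtain ⟨q, hqA, hqinv, hpq, hpqA⟩ := hAcompred p inf_le_left hpinv
  obtain ⟨D', hD', D, hDq, rfl⟩ := Submodule.mem_sup.mp (hpqA ▸ hD₀ : D₀ ∈ p ⊔ q)
  have hDA : D ∈ A := hqA hDq
  have hDφ : ∀ y ∈ Y, D y = φ y := fun y hy => by
    rw [← hD₀φ y hy, LinearMap.add_apply, ((mem_p D').mp hD').2 y hy, zero_add]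
  refine ⟨D, hDA, fun g => ?_, hDφ⟩
  have hmem : conjEnd ρ g D - D ∈ p ⊓ q := by
    refine ⟨(mem_p _).mpr ⟨sub_mem (hAG g D hDA) hDA, fun y hy => ?_⟩,
      sub_mem (hqinv g D hDq) hDq⟩
    rw [LinearMap.sub_apply, conjEnd_apply, hDφ _ (hY g⁻¹ y hy), ← hφ g _ (hY g⁻¹ y hy),
      Representation.self_inv_apply, hDφ y hy, sub_self]
  rwa [hpq, Submodule.mem_bot, sub_eq_zero] at hmem

theorem exists_fixed_mem_separating_of_disjoint [Nontrivial L]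
    (hrank : lift.{0} (Module.rank ℂ L) < lift #ℂ)
    (hAirr : ∀ p : Submodule ℂ L, (∀ T ∈ A, ∀ x ∈ p, T x ∈ p) → p = ⊥ ∨ p = ⊤)
    (hAG : ∀ g : G, ∀ T ∈ A, conjEnd ρ g T ∈ A)
    (hAcompred : ∀ p : Submodule ℂ (Module.End ℂ L),
      p ≤ Subalgebra.toSubmodule A → (∀ g : G, ∀ S ∈ p, conjEnd ρ g S ∈ p) →
      ∃ q : Submodule ℂ (Module.End ℂ L), q ≤ Subalgebra.toSubmodule A ∧
        (∀ g : G, ∀ S ∈ q, conjEnd ρ g S ∈ q) ∧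
        p ⊓ q = ⊥ ∧ p ⊔ q = Subalgebra.toSubmodule A)
    {R R' : Submodule ℂ L} [FiniteDimensional ℂ R] [FiniteDimensional ℂ R']
    (hR : ∀ g : G, ∀ x ∈ R, ρ g x ∈ R) (hR' : ∀ g : G, ∀ x ∈ R', ρ g x ∈ R')
    (hdisj : Disjoint R R') :
    ∃ D ∈ A, (∀ g : G, conjEnd ρ g D = D) ∧ (∀ x ∈ R, D x = x) ∧ ∀ x ∈ R', D x = 0 := by
  obtain ⟨C, hR'C, hCR⟩ := hdisj.symm.exists_isCompl
  let φ := R.projection C hCR.symm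
  have hφR : ∀ x ∈ R, φ x = x := fun x hx => Submodule.projection_apply_of_mem_left _ hx
  have hφR' : ∀ x ∈ R', φ x = 0 := fun x hx =>
    Submodule.projection_apply_of_mem_right _ (hR'C hx)
  have hY : ∀ g : G, ∀ y ∈ R ⊔ R', ρ g y ∈ R ⊔ R' := fun g y hy => by
    obtain ⟨r, hr, r', hr', rfl⟩ := Submodule.mem_sup.mp hy
    rw [map_add]
    exact Submodule.add_mem_sup (hR g r hr) (hR' g r' hr')
  have hφ : ∀ g : G, ∀ y ∈ R ⊔ R', φ (ρ g y) = ρ g (φ y) := fun g y hy => by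
    obtain ⟨r, hr, r', hr', rfl⟩ := Submodule.mem_sup.mp hy
    rw [map_add, map_add, map_add, hφR _ hr, hφR' _ hr', hφR _ (hR g r hr),
      hφR' _ (hR' g r' hr'), add_zero, add_zero]
  have := A.isSimpleModule_of_forall_invariant hAirr
  obtain ⟨D₀, hD₀A, hD₀⟩ := A.exists_mem_eqOn_of_isSimpleModule hrank φ (R ⊔ R')
  obtain ⟨D, hDA, hDG, hD⟩ := exists_fixed_mem_eqOn_of_mem_eqOn ρ hAG hAcompred hY hφ hD₀A hD₀
  exact ⟨D, hDA, hDG, fun x hx => (hD x (Submodule.mem_sup_left hx)).trans (hφR x hx),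
    fun x hx => (hD x (Submodule.mem_sup_right hx)).trans (hφR' x hx)⟩

end Representation

theorem multiplicity_spaces_pairwise_nonisomorphic_general
    {G L : Type*} [Group G] [AddCommGroup L] [Module ℂ L]
    (ρ : Representation ℂ G L)
    -- `L` has countable dimension
    (hcount : ∃ s : Set L, s.Countable ∧ Submodule.span ℂ s = ⊤)
    (A : Subalgebra ℂ (Module.End ℂ L))
    -- `A` acts irreducibly on `L`
    (hAirr : ∀ p : Submodule ℂ L, (∀ T ∈ A, ∀ x ∈ p, T x ∈ p) → p = ⊥ ∨ p = ⊤)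
    -- `A` is invariant under the conjugation `G`-action
    (hAG : ∀ g : G, ∀ T ∈ A, conjEnd ρ g T ∈ A)
    -- the `G`-action on `A` is completely reducible
    (hAcompred : ∀ p : Submodule ℂ (Module.End ℂ L),
      p ≤ Subalgebra.toSubmodule A → (∀ g : G, ∀ S ∈ p, conjEnd ρ g S ∈ p) →
      ∃ q : Submodule ℂ (Module.End ℂ L), q ≤ Subalgebra.toSubmodule A ∧
        (∀ g : G, ∀ S ∈ q, conjEnd ρ g S ∈ q) ∧
        p ⊓ q = ⊥ ∧ p ⊔ q = Subalgebra.toSubmodule A)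
    -- `(π, V)` and `(π', V')` are finite-dimensional irreducible `G`-representations
    {V : Type*} [AddCommGroup V] [Module ℂ V] [FiniteDimensional ℂ V]
    (π : Representation ℂ G V)
    (hVirr : ∀ p : Submodule ℂ V, (∀ g : G, ∀ v ∈ p, π g v ∈ p) → p = ⊥ ∨ p = ⊤)
    {V' : Type*} [AddCommGroup V'] [Module ℂ V'] [FiniteDimensional ℂ V']
    (π' : Representation ℂ G V')
    (hV'irr : ∀ p : Submodule ℂ V', (∀ g : G, ∀ v ∈ p, π' g v ∈ p) → p = ⊥ ∨ p = ⊤)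
    -- both multiplicity spaces are nonzero
    (hne : homG ρ π ≠ ⊥)
    -- `e` is an isomorphism of `A^G`-modules `Hom_G(V, L) ≅ Hom_G(V', L)`
    (e : ↥(homG ρ π) ≃ₗ[ℂ] ↥(homG ρ π'))
    (he : ∀ D ∈ A, (∀ g : G, conjEnd ρ g D = D) →
      ∀ T S : ↥(homG ρ π), (S : V →ₗ[ℂ] L) = D ∘ₗ (T : V →ₗ[ℂ] L) →
        (e S : V' →ₗ[ℂ] L) = D ∘ₗ (e T : V' →ₗ[ℂ] L)) :
    ∃ u : V ≃ₗ[ℂ] V', ∀ (g : G) (v : V), u (π g v) = π' g (u v) := by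
  obtain ⟨s, hs, hspan⟩ := hcount
  obtain ⟨T, hT, hT0⟩ := Submodule.exists_mem_ne_zero_of_ne_bot hne
  set T' := e ⟨T, hT⟩
  have hT'0 : (T' : V' →ₗ[ℂ] L) ≠ 0 := fun h =>
    hT0 (congrArg Subtype.val (e.map_eq_zero_iff.mp (Subtype.ext h)))
  by_cases hdisj : Disjoint (LinearMap.range T) (LinearMap.range (T' : V' →ₗ[ℂ] L))
  swap
  · exact exists_equiv_of_not_disjoint_range hVirr hV'irr hT T'.2
      (injective_of_mem_homG hVirr hT hT0) (injective_of_mem_homG hV'irr T'.2 hT'0) hdisj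
  obtain ⟨v, hv⟩ := DFunLike.ne_iff.mp hT0
  have := nontrivial_of_ne _ _ hv
  obtain ⟨D, hDA, hDG, hDT, hDT'⟩ := exists_fixed_mem_separating_of_disjoint ρ
    (lift_rank_lt_lift_mk_complex_of_countable_span hs hspan) hAirr hAG hAcompred
    (range_invariant_of_mem_homG hT) (range_invariant_of_mem_homG T'.2) hdisj
  have hT'D := he D hDA hDG ⟨T, hT⟩ ⟨T, hT⟩ (LinearMap.ext fun v => (hDT _ ⟨v, rfl⟩).symm)
  refine absurd (LinearMap.ext fun v' => ?_) hT'0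
  exact (LinearMap.congr_fun hT'D v').trans (hDT' _ ⟨v', rfl⟩)

/-- **Abstract Frobenius decomposition, Theorem 2.2, part 2.**
Under the standing hypotheses on `G`, `L` and `A`, if `V` and `W` are
finite-dimensional irreducible complex `G`-representations whose multiplicity
spaces `Hom_G(V, L)` and `Hom_G(W, L)` are nonzero and isomorphic as
`A^G`-modules, then `V` and `W` are isomorphic as `G`-representations. -/
theorem multiplicity_spaces_pairwise_nonisomorphic
    {G L : Type*} [Group G] [AddCommGroup L] [Module ℂ L]
    (ρ : Representation ℂ G L)
    -- `L` has countable dimension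
    (hcount : ∃ s : Set L, s.Countable ∧ Submodule.span ℂ s = ⊤)
    -- the `G`-action on `L` is locally finite
    (hlocfin : ∀ v : L, ∃ Y : Submodule ℂ L,
      (∀ g : G, ∀ y ∈ Y, ρ g y ∈ Y) ∧ FiniteDimensional ℂ Y ∧ v ∈ Y)
    -- the `G`-action on `L` is completely reducible
    (hcompred : ∀ p : Submodule ℂ L, (∀ g : G, ∀ y ∈ p, ρ g y ∈ p) →
      ∃ q : Submodule ℂ L, (∀ g : G, ∀ y ∈ q, ρ g y ∈ q) ∧ IsCompl p q)
    (A : Subalgebra ℂ (Module.End ℂ L))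
    -- `A` acts irreducibly on `L`
    (hAirr : ∀ p : Submodule ℂ L, (∀ T ∈ A, ∀ x ∈ p, T x ∈ p) → p = ⊥ ∨ p = ⊤)
    -- `A` is invariant under the conjugation `G`-action
    (hAG : ∀ g : G, ∀ T ∈ A, conjEnd ρ g T ∈ A)
    -- the `G`-action on `A` is locally finite
    (hAlocfin : ∀ T ∈ A, ∃ E : Submodule ℂ (Module.End ℂ L),
      E ≤ Subalgebra.toSubmodule A ∧ (∀ g : G, ∀ S ∈ E, conjEnd ρ g S ∈ E) ∧
      FiniteDimensional ℂ E ∧ T ∈ E)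
    -- the `G`-action on `A` is completely reducible
    (hAcompred : ∀ p : Submodule ℂ (Module.End ℂ L),
      p ≤ Subalgebra.toSubmodule A → (∀ g : G, ∀ S ∈ p, conjEnd ρ g S ∈ p) →
      ∃ q : Submodule ℂ (Module.End ℂ L), q ≤ Subalgebra.toSubmodule A ∧
        (∀ g : G, ∀ S ∈ q, conjEnd ρ g S ∈ q) ∧
        p ⊓ q = ⊥ ∧ p ⊔ q = Subalgebra.toSubmodule A)
    -- `(π, V)` and `(π', V')` are finite-dimensional irreducible `G`-representations
    {V : Type*} [AddCommGroup V] [Module ℂ V] [FiniteDimensional ℂ V]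
    (π : Representation ℂ G V)
    (hVirr : ∀ p : Submodule ℂ V, (∀ g : G, ∀ v ∈ p, π g v ∈ p) → p = ⊥ ∨ p = ⊤)
    {V' : Type*} [AddCommGroup V'] [Module ℂ V'] [FiniteDimensional ℂ V']
    (π' : Representation ℂ G V')
    (hV'irr : ∀ p : Submodule ℂ V', (∀ g : G, ∀ v ∈ p, π' g v ∈ p) → p = ⊥ ∨ p = ⊤)
    -- both multiplicity spaces are nonzero
    (hne : homG ρ π ≠ ⊥) (hne' : homG ρ π' ≠ ⊥)
    -- `e` is an isomorphism of `A^G`-modules `Hom_G(V, L) ≅ Hom_G(V', L)`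
    (e : ↥(homG ρ π) ≃ₗ[ℂ] ↥(homG ρ π'))
    (he : ∀ D ∈ A, (∀ g : G, conjEnd ρ g D = D) →
      ∀ T S : ↥(homG ρ π), (S : V →ₗ[ℂ] L) = D ∘ₗ (T : V →ₗ[ℂ] L) →
        (e S : V' →ₗ[ℂ] L) = D ∘ₗ (e T : V' →ₗ[ℂ] L)) :
    ∃ u : V ≃ₗ[ℂ] V', ∀ (g : G) (v : V), u (π g v) = π' g (u v) :=
  multiplicity_spaces_pairwise_nonisomorphic_general ρ hcount A hAirr hAG hAcompred π hVirr π'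
    hV'irr hne e he
end
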